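/- Let A and B be finite intervals of consecutive integers each containing 0, with |A| = m and |B| = n, and let the cross S = (A × {0}) ∪ ({0} × B) ⊆ ℤ × ℤ. Then S is a P-position of the Diamond game if and only if m + n is even, m > 1, and n > 1. -/
import Mathlib


/-- Generic P-position predicate for an impartial game whose moves strictly
decrease a natural-number measure: a position is a P-position iff every legal
move from it leads to a position that is not a P-position. -/
def IsP {α : Type*} (f : α → ℕ) (Move : α → α → Prop)
    (hf : ∀ ⦃s t : α⦄, Move s t → f t < f s) (s : α) : Prop :=
  ∀ t : α, (h : Move s t) → ¬ IsP f Move hf t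
termination_by f s
decreasing_by exact hf h

/-- A legal move in the Diamond game: remove all tokens in some nonempty row
(all tokens with a given second coordinate) or some nonempty column (all tokens
with a given first coordinate). -/
def DiamondMove (S T : Finset (ℤ × ℤ)) : Prop :=
  (∃ r : ℤ, (∃ p ∈ S, p.2 = r) ∧ T = S.filter (fun p => p.2 ≠ r)) ∨
  (∃ c : ℤ, (∃ p ∈ S, p.1 = c) ∧ T = S.filter (fun p => p.1 ≠ c))

theorem diamondMove_lt : ∀ ⦃S T : Finset (ℤ × ℤ)⦄, DiamondMove S T → T.card < S.card := by
  rintro S T (⟨r, ⟨p, hpS, hpr⟩, rfl⟩ | ⟨c, ⟨p, hpS, hpc⟩, rfl⟩)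
  · exact Finset.card_lt_card (Finset.filter_ssubset.mpr ⟨p, hpS, by simp [hpr]⟩)
  · exact Finset.card_lt_card (Finset.filter_ssubset.mpr ⟨p, hpS, by simp [hpc]⟩)

/-- P-positions of the Diamond game. -/
def DiamondP : Finset (ℤ × ℤ) → Prop := IsP Finset.card DiamondMove diamondMove_lt

lemma isP_iff {α : Type*} (f : α → ℕ) (Move : α → α → Prop)
    (hf : ∀ ⦃s t : α⦄, Move s t → f t < f s) (s : α) :
    IsP f Move hf s ↔ ∀ t, Move s t → ¬ IsP f Move hf t := by
  rw [IsP]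

lemma diamondP_iff (S : Finset (ℤ × ℤ)) :
    DiamondP S ↔ ∀ T, DiamondMove S T → ¬ DiamondP T :=
  isP_iff _ _ _ S

lemma diamondP_empty : DiamondP (∅ : Finset (ℤ × ℤ)) := by
  rw [DiamondP, isP_iff]
  rintro T (⟨r, ⟨p, hp, _⟩, _⟩ | ⟨c, ⟨p, hp, _⟩, _⟩) <;> simp at hp

lemma not_diamondP_row (A : Finset ℤ) (hA : A.Nonempty) : ¬ DiamondP (A ×ˢ {0}) := by
  rw [diamondP_iff]
  intro h
  obtain ⟨a, ha⟩ := hA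
  refine h ∅ (Or.inl ⟨0, ⟨(a, 0), by simp [ha], rfl⟩, ?_⟩) diamondP_empty
  symm
  rw [Finset.filter_eq_empty_iff]
  rintro ⟨x, y⟩ hp
  simp only [Finset.mem_product, Finset.mem_singleton] at hp
  simp [hp.2]

lemma not_diamondP_col (B : Finset ℤ) (hB : B.Nonempty) : ¬ DiamondP ({0} ×ˢ B) := by
  rw [diamondP_iff]
  intro h
  obtain ⟨b, hb⟩ := hB
  refine h ∅ (Or.inr ⟨0, ⟨(0, b), by simp [hb], rfl⟩, ?_⟩) diamondP_empty
  symm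
  rw [Finset.filter_eq_empty_iff]
  rintro ⟨x, y⟩ hp
  simp only [Finset.mem_product, Finset.mem_singleton] at hp
  simp [hp.1]

section Cross
variable (A B : Finset ℤ)

lemma filter_row0 : (A ×ˢ {0} ∪ {0} ×ˢ B).filter (fun p => p.2 ≠ (0:ℤ)) =
    {0} ×ˢ (B.erase 0) := by
  ext ⟨x, y⟩
  simp only [Finset.mem_filter, Finset.mem_union, Finset.mem_product,
    Finset.mem_singleton, Finset.mem_erase]
  constructor
  · rintro ⟨(⟨hx, rfl⟩ | ⟨rfl, hy⟩), hne⟩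
    · exact absurd rfl hne
    · exact ⟨rfl, hne, hy⟩
  · rintro ⟨rfl, hne, hy⟩
    exact ⟨Or.inr ⟨rfl, hy⟩, hne⟩

lemma filter_col0 : (A ×ˢ {0} ∪ {0} ×ˢ B).filter (fun p => p.1 ≠ (0:ℤ)) =
    (A.erase 0) ×ˢ {0} := by
  ext ⟨x, y⟩
  simp only [Finset.mem_filter, Finset.mem_union, Finset.mem_product,
    Finset.mem_singleton, Finset.mem_erase]
  constructor
  · rintro ⟨(⟨hx, rfl⟩ | ⟨rfl, hy⟩), hne⟩
    · exact ⟨⟨hne, hx⟩, rfl⟩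
    · exact absurd rfl hne
  · rintro ⟨⟨hne, hx⟩, rfl⟩
    exact ⟨Or.inl ⟨hx, rfl⟩, hne⟩

lemma filter_rowr {r : ℤ} (hr : r ≠ 0) :
    (A ×ˢ {0} ∪ {0} ×ˢ B).filter (fun p => p.2 ≠ r) =
    A ×ˢ {0} ∪ {0} ×ˢ (B.erase r) := by
  ext ⟨x, y⟩
  simp only [Finset.mem_filter, Finset.mem_union, Finset.mem_product,
    Finset.mem_singleton, Finset.mem_erase]
  constructor
  · rintro ⟨(⟨hx, rfl⟩ | ⟨rfl, hy⟩), hne⟩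
    · exact Or.inl ⟨hx, rfl⟩
    · exact Or.inr ⟨rfl, hne, hy⟩
  · rintro (⟨hx, rfl⟩ | ⟨rfl, hne, hy⟩)
    · exact ⟨Or.inl ⟨hx, rfl⟩, fun h => hr h.symm⟩
    · exact ⟨Or.inr ⟨rfl, hy⟩, hne⟩

lemma filter_colc {c : ℤ} (hc : c ≠ 0) :
    (A ×ˢ {0} ∪ {0} ×ˢ B).filter (fun p => p.1 ≠ c) =
    (A.erase c) ×ˢ {0} ∪ {0} ×ˢ B := by
  ext ⟨x, y⟩
  simp only [Finset.mem_filter, Finset.mem_union, Finset.mem_product,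
    Finset.mem_singleton, Finset.mem_erase]
  constructor
  · rintro ⟨(⟨hx, rfl⟩ | ⟨rfl, hy⟩), hne⟩
    · exact Or.inl ⟨⟨hne, hx⟩, rfl⟩
    · exact Or.inr ⟨rfl, hy⟩
  · rintro (⟨⟨hne, hx⟩, rfl⟩ | ⟨rfl, hy⟩)
    · exact ⟨Or.inl ⟨hx, rfl⟩, hne⟩
    · exact ⟨Or.inr ⟨rfl, hy⟩, fun h => hc h.symm⟩

lemma cross_moves (hA : 0 ∈ A) (hB : 0 ∈ B) (T : Finset (ℤ × ℤ)) :
    DiamondMove (A ×ˢ {0} ∪ {0} ×ˢ B) T ↔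
      T = {0} ×ˢ (B.erase 0) ∨
      (∃ r ∈ B, r ≠ 0 ∧ T = A ×ˢ {0} ∪ {0} ×ˢ (B.erase r)) ∨
      T = (A.erase 0) ×ˢ {0} ∨
      (∃ c ∈ A, c ≠ 0 ∧ T = (A.erase c) ×ˢ {0} ∪ {0} ×ˢ B) := by
  constructor
  · rintro (⟨r, ⟨p, hp, hpr⟩, rfl⟩ | ⟨c, ⟨p, hp, hpc⟩, rfl⟩)
    · by_cases hr : r = 0
      · subst hr; exact Or.inl (filter_row0 A B)
      · refine Or.inr (Or.inl ⟨r, ?_, hr, filter_rowr A B hr⟩)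
        simp only [Finset.mem_union, Finset.mem_product, Finset.mem_singleton] at hp
        rcases hp with ⟨_, h2⟩ | ⟨_, h2⟩
        · exact absurd (h2 ▸ hpr).symm hr
        · exact hpr ▸ h2
    · by_cases hc : c = 0
      · subst hc; exact Or.inr (Or.inr (Or.inl (filter_col0 A B)))
      · refine Or.inr (Or.inr (Or.inr ⟨c, ?_, hc, filter_colc A B hc⟩))
        simp only [Finset.mem_union, Finset.mem_product, Finset.mem_singleton] at hp
        rcases hp with ⟨h1, _⟩ | ⟨h1, _⟩
        · exact hpc ▸ h1
        · exact absurd (h1 ▸ hpc).symm hc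
  · rintro (rfl | ⟨r, hrB, hr, rfl⟩ | rfl | ⟨c, hcA, hc, rfl⟩)
    · exact Or.inl ⟨0, ⟨(0, 0), by simp [hA], rfl⟩, (filter_row0 A B).symm⟩
    · exact Or.inl ⟨r, ⟨(0, r), by simp [hrB], rfl⟩, (filter_rowr A B hr).symm⟩
    · exact Or.inr ⟨0, ⟨(0, 0), by simp [hA], rfl⟩, (filter_col0 A B).symm⟩
    · exact Or.inr ⟨c, ⟨(c, 0), by simp [hcA], rfl⟩, (filter_colc A B hc).symm⟩

end Cross

lemma cross_P : ∀ N (A B : Finset ℤ), A.card + B.card = N → 0 ∈ A → 0 ∈ B →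
    (DiamondP (A ×ˢ {0} ∪ {0} ×ˢ B) ↔
      Even (A.card + B.card) ∧ 1 < A.card ∧ 1 < B.card) := by
  intro N
  induction N using Nat.strong_induction_on with
  | _ N IH =>
  intro A B hN hA hB
  have hAc : 1 ≤ A.card := Finset.card_pos.mpr ⟨0, hA⟩
  have hBc : 1 ≤ B.card := Finset.card_pos.mpr ⟨0, hB⟩
  constructor
  · intro hP
    rw [diamondP_iff] at hP
    by_contra hcond
    push_neg at hcond
    rcases Nat.lt_or_ge A.card 2 with h1 | h2
    · -- A = {0}, remove column 0 kills everything
      have hAe : A.erase 0 = ∅ := by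
        rw [← Finset.card_eq_zero, Finset.card_erase_of_mem hA]; omega
      refine hP ((A.erase 0) ×ˢ {0}) ?_ ?_
      · exact (cross_moves A B hA hB _).mpr (Or.inr (Or.inr (Or.inl rfl)))
      · rw [hAe, Finset.empty_product]; exact diamondP_empty
    rcases Nat.lt_or_ge B.card 2 with h1 | h2'
    · have hBe : B.erase 0 = ∅ := by
        rw [← Finset.card_eq_zero, Finset.card_erase_of_mem hB]; omega
      refine hP ({0} ×ˢ (B.erase 0)) ?_ ?_
      · exact (cross_moves A B hA hB _).mpr (Or.inl rfl)
      · rw [hBe, Finset.product_empty]; exact diamondP_empty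
    -- both cards ≥ 2, so the sum must be odd
    by_cases he : Even (A.card + B.card)
    · exact absurd h2' (Nat.not_lt.mpr (hcond he h2))
    obtain ⟨j, hj⟩ := Nat.odd_iff.mpr (Nat.not_even_iff.mp he)
    rcases Nat.lt_or_ge A.card 3 with h3 | h3
    · -- then B.card ≥ 3; remove a column... remove a row r ≠ 0
      obtain ⟨r, hrB, hr⟩ := Finset.exists_mem_ne h2' (0 : ℤ)
      refine hP (A ×ˢ {0} ∪ {0} ×ˢ (B.erase r))
        ((cross_moves A B hA hB _).mpr (Or.inr (Or.inl ⟨r, hrB, hr, rfl⟩))) ?_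
      have h0 : 0 ∈ B.erase r := Finset.mem_erase.mpr ⟨fun h => hr h.symm, hB⟩
      have hce : (B.erase r).card = B.card - 1 := Finset.card_erase_of_mem hrB
      rw [IH (A.card + (B.erase r).card) (by omega) A _ rfl hA h0]
      exact ⟨⟨j, by omega⟩, by omega, by omega⟩
    · obtain ⟨c, hcA, hc⟩ := Finset.exists_mem_ne h2 (0 : ℤ)
      refine hP ((A.erase c) ×ˢ {0} ∪ {0} ×ˢ B)
        ((cross_moves A B hA hB _).mpr (Or.inr (Or.inr (Or.inr ⟨c, hcA, hc, rfl⟩)))) ?_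
      have h0 : 0 ∈ A.erase c := Finset.mem_erase.mpr ⟨fun h => hc h.symm, hA⟩
      have hce : (A.erase c).card = A.card - 1 := Finset.card_erase_of_mem hcA
      rw [IH ((A.erase c).card + B.card) (by omega) _ B rfl h0 hB]
      exact ⟨⟨j, by omega⟩, by omega, by omega⟩
  · rintro ⟨heven, hAcard, hBcard⟩
    rw [diamondP_iff]
    intro T hT
    rw [cross_moves A B hA hB] at hT
    obtain ⟨k, hk⟩ := heven
    rcases hT with rfl | ⟨r, hrB, hr, rfl⟩ | rfl | ⟨c, hcA, hc, rfl⟩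
    · exact not_diamondP_col _ (Finset.card_pos.mp
        (by rw [Finset.card_erase_of_mem hB]; omega))
    · have h0 : 0 ∈ B.erase r := Finset.mem_erase.mpr ⟨fun h => hr h.symm, hB⟩
      have hce : (B.erase r).card = B.card - 1 := Finset.card_erase_of_mem hrB
      rw [IH (A.card + (B.erase r).card) (by omega) A _ rfl hA h0]
      rintro ⟨⟨j, hj⟩, -, -⟩
      omega
    · exact not_diamondP_row _ (Finset.card_pos.mp
        (by rw [Finset.card_erase_of_mem hA]; omega))
    · have h0 : 0 ∈ A.erase c := Finset.mem_erase.mpr ⟨fun h => hc h.symm, hA⟩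
      have hce : (A.erase c).card = A.card - 1 := Finset.card_erase_of_mem hcA
      rw [IH ((A.erase c).card + B.card) (by omega) _ B rfl h0 hB]
      rintro ⟨⟨j, hj⟩, -, -⟩
      omega

/-- **Cross positions.** Let `A = [a₁, a₂]` and `B = [b₁, b₂]` be finite intervals
of consecutive integers each containing `0`, with `|A| = m` and `|B| = n`, and let
the cross `S = (A × {0}) ∪ ({0} × B)`. Then `S` is a P-position of the Diamond game
if and only if `m + n` is even, `m > 1`, and `n > 1`. -/
theorem diamond_cross_P (a1 a2 b1 b2 : ℤ) (m n : ℕ)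
    (hA0 : a1 ≤ 0 ∧ 0 ≤ a2) (hB0 : b1 ≤ 0 ∧ 0 ≤ b2)
    (hm : (Finset.Icc a1 a2).card = m) (hn : (Finset.Icc b1 b2).card = n) :
    DiamondP ((Finset.Icc a1 a2) ×ˢ ({0} : Finset ℤ) ∪ ({0} : Finset ℤ) ×ˢ (Finset.Icc b1 b2)) ↔
      Even (m + n) ∧ 1 < m ∧ 1 < n := by
  subst hm hn
  exact cross_P _ _ _ rfl (Finset.mem_Icc.mpr hA0) (Finset.mem_Icc.mpr hB0)
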